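/- The optimization problem V_t := inf_α ∫_t^1 c(s)·α(s)·(∫_s^1 α(r) dr) ds is time inconsistent: there is no single admissible control α* that attains the infimum V_t simultaneously for all t ∈ [0,1). -/

import Mathlib

open MeasureTheory Set

noncomputable def tn (n : ℕ) : ℝ := 1 - 1 / 2 ^ n
noncomputable def sn (n : ℕ) : ℝ := (tn n + 3 * tn (n + 1)) / 4
noncomputable def c (x : ℝ) : ℝ :=
  ∑' n : ℕ, ((Ico (tn n) (sn n)).indicator (fun _ => (1 : ℝ)) x
    + 6 * (Ico (sn n) (tn (n + 1))).indicator (fun _ => (1 : ℝ)) x)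
noncomputable def J (t : ℝ) (α : ℝ → ℝ) : ℝ :=
  ∫ s in t..1, c s * α s * ∫ r in s..1, α r

def Admissible (α : ℝ → ℝ) : Prop := Measurable α ∧ ∀ x, α x ∈ Icc (-1 : ℝ) 1

/-!
Write `tail α s = ∫ r in s..1, α r`. If `α` were optimal from every `t ∈ [0, 1)`, then comparing
it at time `p` with the control that equals a constant `v ∈ [-1, 1]` on `[p, q)` and `α` afterwards
gives `∫ s in p..q, c s * (α s - v) * tail α s ≤ 12 (q - p)²`; summing over finer and finer
partitions, these integrals are `≤ 0` on every subinterval of `[0, 1]`. With `v = -1` this rules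
out `tail α t = m > 0`: up to the first time `u` after `t` at which the tail drops to `m / 2`, the
integrand is at least `(m / 2) (α + 1)`, whose integral is at least `m² / 4`. As `-α` is optimal as
well, `tail α` vanishes on `[0, 1]`, so `J 0 α = 0`. But one period of the alternating control `â`,
`-1` on `[3/8, 1/2)` where `c = 6` and `+1` on `[1/2, 5/8)` where `c = 1`, has `J 0 â = -5/128`.
-/

lemma tn_lt_tn_succ (n : ℕ) : tn n < tn (n + 1) := by
  have h : (0 : ℝ) < 2 ^ n := by positivity
  rw [tn, tn, pow_succ, sub_lt_sub_iff_left]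
  exact one_div_lt_one_div_of_lt h (by linarith)

lemma tn_strictMono : StrictMono tn := strictMono_nat_of_lt_succ tn_lt_tn_succ

lemma tn_zero : tn 0 = 0 := by norm_num [tn]

lemma tn_nonneg (n : ℕ) : 0 ≤ tn n := tn_zero ▸ tn_strictMono.monotone n.zero_le

lemma tn_lt_one (n : ℕ) : tn n < 1 := by
  have : (0 : ℝ) < 1 / 2 ^ n := by positivity
  rw [tn]; linarith

lemma tn_lt_sn (n : ℕ) : tn n < sn n := by
  have := tn_lt_tn_succ n; rw [sn]; linarith

lemma sn_lt_tn_succ (n : ℕ) : sn n < tn (n + 1) := by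
  have := tn_lt_tn_succ n; rw [sn]; linarith

lemma exists_mem_Ico_tn {x : ℝ} (hx : x ∈ Ico (0 : ℝ) 1) :
    ∃ n, x ∈ Ico (tn n) (tn (n + 1)) := by
  have h1x : 0 < 1 - x := by linarith [hx.2]
  obtain ⟨n, hn, hn'⟩ := exists_nat_pow_near (one_le_one_div h1x (by linarith [hx.1]))
    (one_lt_two : (1 : ℝ) < 2)
  refine ⟨n, ?_, ?_⟩
  · rw [le_one_div (by positivity) h1x] at hn
    rw [tn]; linarith
  · rw [one_div_lt h1x (by positivity)] at hn'
    rw [tn]; linarith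

lemma c_summand_eq_zero {m : ℕ} {x : ℝ} (hx : x ∉ Ico (tn m) (tn (m + 1))) :
    (Ico (tn m) (sn m)).indicator (fun _ => (1 : ℝ)) x
      + 6 * (Ico (sn m) (tn (m + 1))).indicator (fun _ => (1 : ℝ)) x = 0 := by
  rw [indicator_of_notMem fun h => hx ⟨h.1, h.2.trans (sn_lt_tn_succ m)⟩,
    indicator_of_notMem fun h => hx ⟨(tn_lt_sn m).le.trans h.1, h.2⟩]
  norm_num

lemma c_eq_of_mem_Ico {n : ℕ} {x : ℝ} (hx : x ∈ Ico (tn n) (tn (n + 1))) :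
    c x = if x < sn n then 1 else 6 := by
  have hdisj := tn_strictMono.monotone.pairwise_disjoint_on_Ico_succ
  rw [c, tsum_eq_single n fun m hm =>
    c_summand_eq_zero fun h => (hdisj hm).le_bot ⟨h, hx⟩]
  split_ifs with h
  · rw [indicator_of_mem (show x ∈ Ico (tn n) (sn n) from ⟨hx.1, h⟩),
      indicator_of_notMem fun h' => (not_lt.2 h'.1) h]
    norm_num
  · rw [indicator_of_notMem fun h' => h h'.2,
      indicator_of_mem (show x ∈ Ico (sn n) (tn (n + 1)) from ⟨not_lt.1 h, hx.2⟩)]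
    norm_num

lemma c_eq_zero {x : ℝ} (hx : x ∉ Ico (0 : ℝ) 1) : c x = 0 := by
  rw [c]
  convert tsum_zero with m
  exact c_summand_eq_zero fun h => hx ⟨(tn_nonneg m).trans h.1, h.2.trans (tn_lt_one _)⟩

lemma one_le_c {x : ℝ} (hx : x ∈ Ico (0 : ℝ) 1) : 1 ≤ c x := by
  obtain ⟨n, hn⟩ := exists_mem_Ico_tn hx
  rw [c_eq_of_mem_Ico hn]
  split_ifs <;> norm_num

lemma abs_c_le (x : ℝ) : |c x| ≤ 6 := by
  by_cases hx : x ∈ Ico (0 : ℝ) 1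
  · obtain ⟨n, hn⟩ := exists_mem_Ico_tn hx
    rw [c_eq_of_mem_Ico hn]
    split_ifs <;> norm_num
  · simp [c_eq_zero hx]

lemma measurable_c : Measurable c :=
  Measurable.tsum fun _ => (measurable_const.indicator measurableSet_Ico).add
    ((measurable_const.indicator measurableSet_Ico).const_mul 6)

noncomputable def tail (α : ℝ → ℝ) (s : ℝ) : ℝ := ∫ r in s..1, α r

lemma J_eq_integral_tail (t : ℝ) (α : ℝ → ℝ) : J t α = ∫ s in t..1, c s * α s * tail α s := rfl

lemma tail_one (α : ℝ → ℝ) : tail α 1 = 0 := intervalIntegral.integral_same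

lemma tail_neg (α : ℝ → ℝ) (s : ℝ) : tail (-α) s = -tail α s := intervalIntegral.integral_neg

lemma J_neg (t : ℝ) (α : ℝ → ℝ) : J t (-α) = J t α := by
  simp only [J_eq_integral_tail, tail_neg, Pi.neg_apply, mul_neg, neg_mul, neg_neg]

lemma intervalIntegrable_c_mul_mul {f g : ℝ → ℝ} {C : ℝ} (hf : Measurable f)
    (hfC : ∀ x, |f x| ≤ C) (hg : Continuous g) (a b : ℝ) :
    IntervalIntegrable (fun x => c x * f x * g x) volume a b := by
  refine IntervalIntegrable.mul_continuousOn ?_ hg.continuousOn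
  refine (intervalIntegrable_const (c := 6 * C)).mono_fun'
    (measurable_c.mul hf).aestronglyMeasurable (ae_of_all _ fun x => ?_)
  change |c x * f x| ≤ 6 * C
  rw [abs_mul]
  exact mul_le_mul (abs_c_le x) (hfC x) (abs_nonneg _) (by norm_num)

lemma integral_c_mul_tail_eq_zero_of_eqOn {α : ℝ → ℝ} {p q : ℝ} (hpq : p ≤ q)
    (h : EqOn α (fun _ => 0) (Ioo p q)) : ∫ s in p..q, c s * α s * tail α s = 0 := by
  rw [intervalIntegral.integral_congr_Ioo_of_le hpq (g := fun _ => 0) fun x hx => by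
    simp [h hx], intervalIntegral.integral_zero]

namespace Admissible

variable {α : ℝ → ℝ} (hα : Admissible α)
include hα

lemma abs_le_one (x : ℝ) : |α x| ≤ 1 := abs_le.2 (hα.2 x)

lemma neg : Admissible (-α) :=
  ⟨hα.1.neg, fun x => ⟨by simp [(hα.2 x).2], by simp [neg_le.1 (hα.2 x).1]⟩⟩

lemma intervalIntegrable (a b : ℝ) : IntervalIntegrable α volume a b :=
  (intervalIntegrable_const (c := 1)).mono_fun' hα.1.aestronglyMeasurable
    (ae_of_all _ fun x => hα.abs_le_one x)

lemma tail_sub (a b : ℝ) : tail α a - tail α b = ∫ x in a..b, α x := by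
  rw [tail, tail, ← intervalIntegral.integral_add_adjacent_intervals
    (hα.intervalIntegrable a b) (hα.intervalIntegrable b 1), add_sub_cancel_right]

lemma abs_tail_sub_le (a b : ℝ) : |tail α a - tail α b| ≤ |b - a| := by
  rw [hα.tail_sub]
  simpa using intervalIntegral.norm_integral_le_of_norm_le_const (a := a) (b := b)
    fun x _ => (Real.norm_eq_abs _).trans_le (hα.abs_le_one x)

lemma continuous_tail : Continuous (tail α) :=
  LipschitzWith.continuous (K := 1) <| LipschitzWith.of_dist_le_mul fun a b => by
    simpa [Real.dist_eq, abs_sub_comm b a] using hα.abs_tail_sub_le a b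

lemma intervalIntegrable_c_mul_sub_mul_tail {v : ℝ} (hv : |v| ≤ 1) (a b : ℝ) :
    IntervalIntegrable (fun s => c s * (α s - v) * tail α s) volume a b :=
  intervalIntegrable_c_mul_mul (f := fun s => α s - v) (C := 1 + 1) (hα.1.sub measurable_const)
    (fun x => (abs_sub _ _).trans (add_le_add (hα.abs_le_one x) hv)) hα.continuous_tail a b

lemma J_split (p q : ℝ) : J p α = (∫ s in p..q, c s * α s * tail α s) + J q α :=
  (intervalIntegral.integral_add_adjacent_intervals
    (intervalIntegrable_c_mul_mul hα.1 hα.abs_le_one hα.continuous_tail p q)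
    (intervalIntegrable_c_mul_mul hα.1 hα.abs_le_one hα.continuous_tail q 1)).symm

lemma tail_eq_of_eqOn {p q v : ℝ} (h : EqOn α (fun _ => v) (Ioo p q)) {s : ℝ}
    (hs : s ∈ Icc p q) : tail α s = v * (q - s) + tail α q := by
  rw [← sub_eq_iff_eq_add, hα.tail_sub, intervalIntegral.integral_congr_Ioo_of_le hs.2
    fun x hx => h ⟨hs.1.trans_lt hx.1, hx.2⟩, intervalIntegral.integral_const, smul_eq_mul,
    mul_comm]

lemma integral_c_mul_tail_of_eqOn {p q k v : ℝ} (hpq : p ≤ q) (hc : EqOn c (fun _ => k) (Ioo p q))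
    (h : EqOn α (fun _ => v) (Ioo p q)) :
    ∫ s in p..q, c s * α s * tail α s = k * v * (v * (q - p) ^ 2 / 2 + tail α q * (q - p)) := by
  rw [intervalIntegral.integral_congr_Ioo_of_le hpq
    (g := fun s => k * v * (v * (q - s) + tail α q)) fun x hx => by
      simp only [hc hx, h hx, hα.tail_eq_of_eqOn h (Ioo_subset_Icc_self hx)]]
  have hlin : IntervalIntegrable (fun s : ℝ => v * (q - s)) volume p q :=
    (continuous_const.mul (continuous_const.sub continuous_id)).intervalIntegrable _ _
  rw [intervalIntegral.integral_const_mul, intervalIntegral.integral_add hlin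
    intervalIntegrable_const, intervalIntegral.integral_const_mul,
    intervalIntegral.integral_comp_sub_left (fun s => s)]
  simp only [sub_self, integral_id, intervalIntegral.integral_const, smul_eq_mul]
  ring

end Admissible

lemma integral_c_mul_tail_le_of_forall_J_le {α : ℝ → ℝ} (hα : Admissible α) {p q v : ℝ}
    (hopt : ∀ β, Admissible β → J p α ≤ J p β) (hpq : p ≤ q) (hq : q ≤ 1) (hv : |v| ≤ 1) :
    ∫ s in p..q, c s * α s * tail α s ≤ ∫ s in p..q, c s * v * (v * (q - s) + tail α q) := by
  set β : ℝ → ℝ := fun x => if x < q then v else α x with hβ_def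
  have hβ : Admissible β := ⟨Measurable.ite measurableSet_Iio measurable_const hα.1, fun x => by
    by_cases hx : x < q
    · simpa [hβ_def, hx] using abs_le.1 hv
    · simpa [hβ_def, hx] using hα.2 x⟩
  have hβα : EqOn β α (Icc q 1) := fun x hx => if_neg (not_lt.2 hx.1)
  have htail : EqOn (tail β) (tail α) (Icc q 1) := fun s hs =>
    intervalIntegral.integral_congr fun x hx => by
      rw [uIcc_of_le hs.2] at hx
      exact hβα ⟨hs.1.trans hx.1, hx.2⟩
  have hJ : J q β = J q α := by
    rw [J_eq_integral_tail, J_eq_integral_tail]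
    refine intervalIntegral.integral_congr fun x hx => ?_
    rw [uIcc_of_le hq] at hx
    simp only [hβα hx, htail hx]
  have hβv : EqOn β (fun _ => v) (Ioo p q) := fun x hx => if_pos hx.2
  have hβ_int : ∫ s in p..q, c s * β s * tail β s
      = ∫ s in p..q, c s * v * (v * (q - s) + tail α q) :=
    intervalIntegral.integral_congr_Ioo_of_le hpq fun x hx => by
      rw [hβv hx, hβ.tail_eq_of_eqOn hβv (Ioo_subset_Icc_self hx), htail ⟨le_rfl, hq⟩]
  have := hopt β hβ
  rw [hα.J_split p q, hβ.J_split p q, hJ, hβ_int] at this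
  linarith

lemma integral_c_mul_sub_mul_tail_le {α : ℝ → ℝ} (hα : Admissible α) {p q v : ℝ}
    (hopt : ∀ β, Admissible β → J p α ≤ J p β) (hpq : p ≤ q) (hq : q ≤ 1) (hv : |v| ≤ 1) :
    ∫ s in p..q, c s * (α s - v) * tail α s ≤ 12 * (q - p) ^ 2 := by
  have hcmp := integral_c_mul_tail_le_of_forall_J_le hα hopt hpq hq hv
  have hbound : ∀ x ∈ uIoc p q,
      ‖c x * v * (v * (q - x) + tail α q - tail α x)‖ ≤ 12 * (q - p) := by
    intro x hx
    rw [uIoc_of_le hpq] at hx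
    have hqx : |q - x| ≤ q - p := abs_le.2 ⟨by linarith [hx.2], by linarith [hx.1]⟩
    have htx : |tail α q - tail α x| ≤ q - p :=
      (hα.abs_tail_sub_le q x).trans (abs_sub_comm x q ▸ hqx)
    rw [Real.norm_eq_abs, abs_mul, abs_mul, add_sub_assoc]
    calc _ ≤ 6 * 1 * (|v| * |q - x| + |tail α q - tail α x|) := by
          gcongr
          · exact abs_c_le x
          · exact (abs_add_le _ _).trans_eq (by rw [abs_mul])
      _ ≤ 6 * 1 * (1 * (q - p) + (q - p)) := by gcongr
      _ = 12 * (q - p) := by ring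
  have hI₁ := intervalIntegrable_c_mul_mul hα.1 hα.abs_le_one hα.continuous_tail p q
  have hI₂ := intervalIntegrable_c_mul_mul (f := fun _ => v) measurable_const (fun _ => hv)
    hα.continuous_tail p q
  have hI₃ := intervalIntegrable_c_mul_mul (f := fun _ => v)
    (g := fun s => v * (q - s) + tail α q) measurable_const (fun _ => hv) (by fun_prop) p q
  calc ∫ s in p..q, c s * (α s - v) * tail α s
      = (∫ s in p..q, c s * α s * tail α s) - ∫ s in p..q, c s * v * tail α s := by
        rw [← intervalIntegral.integral_sub hI₁ hI₂]
        congr 1; ext s; ring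
    _ ≤ (∫ s in p..q, c s * v * (v * (q - s) + tail α q)) - ∫ s in p..q, c s * v * tail α s := by
        linarith
    _ = ∫ s in p..q, c s * v * (v * (q - s) + tail α q - tail α s) := by
        rw [← intervalIntegral.integral_sub hI₃ hI₂]
        congr 1; ext s; ring
    _ ≤ 12 * (q - p) * |q - p| :=
        (le_abs_self _).trans (intervalIntegral.norm_integral_le_of_norm_le_const hbound)
    _ = 12 * (q - p) ^ 2 := by rw [abs_of_nonneg (sub_nonneg.2 hpq)]; ring

lemma le_of_sub_le_mul_sq {G : ℝ → ℝ} {a b K : ℝ} (hab : a ≤ b)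
    (h : ∀ p q, a ≤ p → p ≤ q → q ≤ b → G q - G p ≤ K * (q - p) ^ 2) : G b ≤ G a := by
  have hbound : ∀ N : ℕ, 0 < N → G b - G a ≤ K * (b - a) ^ 2 / N := by
    intro N hN
    have hN' : (0 : ℝ) < N := Nat.cast_pos.2 hN
    set x : ℕ → ℝ := fun i => a + i * ((b - a) / N) with hx
    have hx_mono : Monotone x := fun i j hij => by
      simp only [hx]; gcongr
    have hxN : x N = b := by simp only [hx]; field_simp; ring
    have hx0 : x 0 = a := by simp [hx]
    calc G b - G a = ∑ i ∈ Finset.range N, (G (x (i + 1)) - G (x i)) := by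
          rw [Finset.sum_range_sub (fun i => G (x i)), hxN, hx0]
      _ ≤ ∑ i ∈ Finset.range N, K * ((b - a) / N) ^ 2 := by
          refine Finset.sum_le_sum fun i hi => ?_
          have hstep : x (i + 1) - x i = (b - a) / N := by simp only [hx]; push_cast; ring
          rw [← hstep]
          refine h _ _ (hx0 ▸ hx_mono i.zero_le) (hx_mono i.le_succ) ?_
          exact hxN ▸ hx_mono (Finset.mem_range.1 hi)
      _ = K * (b - a) ^ 2 / N := by
          rw [Finset.sum_const, Finset.card_range, nsmul_eq_mul]; field_simp
  have hlim := tendsto_const_div_atTop_nhds_zero_nat (K * (b - a) ^ 2)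
  exact sub_nonpos.1 <| ge_of_tendsto hlim <| Filter.eventually_atTop.2 ⟨1, hbound⟩

def IsUniformlyOptimal (α : ℝ → ℝ) : Prop :=
  Admissible α ∧ ∀ t ∈ Ico (0 : ℝ) 1, ∀ β, Admissible β → J t α ≤ J t β

namespace IsUniformlyOptimal

variable {α : ℝ → ℝ} (h : IsUniformlyOptimal α)
include h

lemma neg : IsUniformlyOptimal (-α) :=
  ⟨h.1.neg, fun t ht β hβ => J_neg t α ▸ h.2 t ht β hβ⟩

lemma integral_c_mul_sub_mul_tail_nonpos {a b v : ℝ} (ha : 0 ≤ a) (hab : a ≤ b) (hb : b ≤ 1)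
    (hv : |v| ≤ 1) : ∫ s in a..b, c s * (α s - v) * tail α s ≤ 0 := by
  have hI := h.1.intervalIntegrable_c_mul_sub_mul_tail hv
  have := le_of_sub_le_mul_sq (G := fun x => ∫ s in a..x, c s * (α s - v) * tail α s) (K := 12)
    hab fun p q hp hpq hq => by
      simp only [intervalIntegral.integral_interval_sub_left (hI a q) (hI a p)]
      rcases hpq.eq_or_lt with rfl | hlt
      · simp
      · exact integral_c_mul_sub_mul_tail_le h.1
          (h.2 p ⟨ha.trans hp, hlt.trans_le (hq.trans hb)⟩) hpq (hq.trans hb) hv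
  simpa using this

lemma tail_nonpos {t : ℝ} (ht : t ∈ Icc (0 : ℝ) 1) : tail α t ≤ 0 := by
  by_contra! hm
  set m := tail α t
  set S := Icc t 1 ∩ tail α ⁻¹' Iic (m / 2)
  have hS_bdd : BddBelow S := ⟨t, fun x hx => hx.1.1⟩
  have hu : sInf S ∈ S :=
    (isClosed_Icc.inter (isClosed_Iic.preimage h.1.continuous_tail)).csInf_mem
      ⟨1, ⟨ht.2, le_rfl⟩, by simp only [mem_preimage, tail_one, mem_Iic]; linarith⟩ hS_bdd
  set u := sInf S
  have htu : t ≤ u := hu.1.1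
  have hu_tail : tail α u ≤ m / 2 := hu.2
  have hgt : ∀ x ∈ Ioo t u, m / 2 < tail α x := fun x hx => by
    by_contra! hle
    exact not_le.2 hx.2 (csInf_le hS_bdd ⟨⟨hx.1.le, hx.2.le.trans hu.1.2⟩, hle⟩)
  have hmass : ∫ x in t..u, (α x + 1) = (m - tail α u) + (u - t) := by
    rw [intervalIntegral.integral_add (h.1.intervalIntegrable t u) intervalIntegrable_const,
      ← h.1.tail_sub, intervalIntegral.integral_const, smul_eq_mul, mul_one]
  have hlower : m / 2 * (m / 2) ≤ ∫ x in t..u, c x * (α x - -1) * tail α x :=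
    calc m / 2 * (m / 2) ≤ m / 2 * ∫ x in t..u, (α x + 1) := by
          rw [hmass]; gcongr; linarith
      _ = ∫ x in t..u, m / 2 * (α x + 1) := (intervalIntegral.integral_const_mul _ _).symm
      _ ≤ ∫ x in t..u, c x * (α x - -1) * tail α x := by
          refine intervalIntegral.integral_mono_on_of_le_Ioo htu
            (((h.1.intervalIntegrable t u).add intervalIntegrable_const).const_mul _)
            (h.1.intervalIntegrable_c_mul_sub_mul_tail (by norm_num) t u) fun x hx => ?_
          have hc := one_le_c ⟨ht.1.trans hx.1.le, hx.2.trans_le hu.1.2⟩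
          have hα : 0 ≤ α x + 1 := by linarith [(h.1.2 x).1]
          have hx_tail := hgt x hx
          rw [sub_neg_eq_add, mul_assoc]
          calc m / 2 * (α x + 1) ≤ (α x + 1) * tail α x := by
                rw [mul_comm]; exact mul_le_mul_of_nonneg_left hx_tail.le hα
            _ ≤ c x * ((α x + 1) * tail α x) :=
                le_mul_of_one_le_left (mul_nonneg hα (by linarith)) hc
  have := h.integral_c_mul_sub_mul_tail_nonpos ht.1 htu hu.1.2 (v := -1) (by norm_num)
  nlinarith

lemma tail_eq_zero {t : ℝ} (ht : t ∈ Icc (0 : ℝ) 1) : tail α t = 0 :=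
  le_antisymm (h.tail_nonpos ht) (by simpa [tail_neg] using h.neg.tail_nonpos ht)

lemma J_zero_eq_zero : J 0 α = 0 := by
  rw [J_eq_integral_tail, intervalIntegral.integral_congr_Ioo_of_le zero_le_one (g := fun _ => 0)
    fun x hx => by simp [h.tail_eq_zero (Ioo_subset_Icc_self hx)], intervalIntegral.integral_zero]

end IsUniformlyOptimal

noncomputable def ahat (x : ℝ) : ℝ :=
  if x ∈ Ico (3 / 8 : ℝ) (1 / 2) then -1 else if x ∈ Ico (1 / 2 : ℝ) (5 / 8) then 1 else 0

lemma admissible_ahat : Admissible ahat := by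
  refine ⟨Measurable.ite measurableSet_Ico measurable_const
    (Measurable.ite measurableSet_Ico measurable_const measurable_const), fun x => ?_⟩
  unfold ahat
  split_ifs <;> norm_num

lemma ahat_eq_zero {x : ℝ} (hx : x ∉ Ico (3 / 8 : ℝ) (5 / 8)) : ahat x = 0 := by
  rw [ahat, if_neg fun h => hx ⟨h.1, by linarith [h.2]⟩,
    if_neg fun h => hx ⟨by linarith [h.1], h.2⟩]

lemma ahat_eqOn_neg_one : EqOn ahat (fun _ => -1) (Ioo (3 / 8) (1 / 2)) := fun x hx => by
  rw [ahat, if_pos ⟨hx.1.le, hx.2⟩]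

lemma ahat_eqOn_one : EqOn ahat (fun _ => 1) (Ioo (1 / 2) (5 / 8)) := fun x hx => by
  rw [ahat, if_neg fun h => by linarith [h.2, hx.1], if_pos ⟨hx.1.le, hx.2⟩]

lemma c_eqOn_six : EqOn c (fun _ => 6) (Ioo (3 / 8) (1 / 2)) := fun x hx => by
  rw [c_eq_of_mem_Ico (n := 0) ⟨by norm_num [tn]; linarith [hx.1], by norm_num [tn]; exact hx.2⟩,
    if_neg (by norm_num [sn, tn]; linarith [hx.1])]

lemma c_eqOn_one : EqOn c (fun _ => 1) (Ioo (1 / 2) (5 / 8)) := fun x hx => by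
  rw [c_eq_of_mem_Ico (n := 1)
      ⟨by norm_num [tn]; linarith [hx.1], by norm_num [tn]; linarith [hx.2]⟩,
    if_pos (by norm_num [sn, tn]; linarith [hx.2])]

lemma J_zero_ahat : J 0 ahat = -5 / 128 := by
  have hA := admissible_ahat
  have hzero_left : EqOn ahat (fun _ => 0) (Ioo 0 (3 / 8)) :=
    fun x hx => ahat_eq_zero fun h => by linarith [h.1, hx.2]
  have hzero_right : EqOn ahat (fun _ => 0) (Ioo (5 / 8) 1) :=
    fun x hx => ahat_eq_zero fun h => by linarith [h.2, hx.1]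
  have h58 : tail ahat (5 / 8) = 0 := by
    rw [hA.tail_eq_of_eqOn hzero_right ⟨le_rfl, by norm_num⟩, tail_one]; ring
  have h12 : tail ahat (1 / 2) = 1 / 8 := by
    rw [hA.tail_eq_of_eqOn ahat_eqOn_one ⟨le_rfl, by norm_num⟩, h58]; norm_num
  rw [hA.J_split 0 (3 / 8), hA.J_split (3 / 8) (1 / 2), hA.J_split (1 / 2) (5 / 8),
    J_eq_integral_tail (5 / 8),
    integral_c_mul_tail_eq_zero_of_eqOn (by norm_num) hzero_left,
    hA.integral_c_mul_tail_of_eqOn (by norm_num) c_eqOn_six ahat_eqOn_neg_one,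
    hA.integral_c_mul_tail_of_eqOn (by norm_num) c_eqOn_one ahat_eqOn_one,
    integral_c_mul_tail_eq_zero_of_eqOn (by norm_num) hzero_right, h12, h58]
  norm_num

theorem stmt13 :
    ¬ ∃ αs : ℝ → ℝ, Admissible αs ∧
        ∀ t ∈ Ico (0 : ℝ) 1, ∀ α : ℝ → ℝ, Admissible α → J t αs ≤ J t α := by
  rintro ⟨αs, hαs⟩
  have h := hαs.2 0 ⟨le_rfl, one_pos⟩ ahat admissible_ahat
  rw [IsUniformlyOptimal.J_zero_eq_zero hαs, J_zero_ahat] at h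
  norm_num at h
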